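/- Assume hypotheses (D), (M), (I). For each ε>0, t₀∈ℝ, and u₀∈C_γ, the sigmoidal system admits at most one solution with initial datum u₀ at t=t₀: if u¹:(−∞,t₁)→ℝ^{n²} and u²:(−∞,t₂)→ℝ^{n²} are both continuous, satisfy u¹_{t₀}=u²_{t₀}=u₀, and satisfy (uⁱ)'(t)=f_ε(t,uⁱ_t) on [t₀,t₁) and [t₀,t₂) respectively, then u¹=u² on (−∞, min{t₁,t₂}). -/

import Mathlib

open MeasureTheory Set Filter Topology Pointwise

noncomputable section

/-- Index set for the synaptic variables `z i j`, `i ≠ j`. -/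
abbrev IdxZ (n : ℕ) := {p : Fin n × Fin n // p.1 ≠ p.2}

/-- The state space `ℝ^{n²} = ℝ^n × ℝ^{n(n-1)}`, with the norm
`‖(x,z)‖ = max (‖x‖_∞) (‖z‖_∞)` (product of supremum norms). -/
abbrev NState (n : ℕ) := (Fin n → ℝ) × (IdxZ n → ℝ)

/-- The `C_γ` norm: `‖u‖_γ = sup_{t ≤ 0} e^{γ t} ‖u t‖`. -/
def gNorm (γ : ℝ) {E : Type*} [NormedAddCommGroup E] (u : ℝ → E) : ℝ :=
  ⨆ t : Iic (0 : ℝ), Real.exp (γ * t.1) * ‖u t.1‖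

/-- Membership in `C_γ`: continuity on `(-∞,0]`, existence of a finite limit of
`e^{γ t} u t` as `t → -∞`, and boundedness of `e^{γ t} ‖u t‖` on `(-∞,0]`. -/
def InC (γ : ℝ) {E : Type*} [NormedAddCommGroup E] [NormedSpace ℝ E] (u : ℝ → E) : Prop :=
  ContinuousOn u (Iic 0) ∧
    (∃ L : E, Tendsto (fun t => Real.exp (γ * t) • u t) atBot (𝓝 L)) ∧
    BddAbove (range fun t : Iic (0 : ℝ) => Real.exp (γ * t.1) * ‖u t.1‖)

/-- The history `u_t(s) = u (t+s)`. -/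
def hist {E : Type*} (u : ℝ → E) (t : ℝ) : ℝ → E := fun s => u (t + s)

/-- The sigmoidal function `σ_ε (s) = 1/(1+e^{-s/ε})`. -/
def sigm (ε s : ℝ) : ℝ := 1 / (1 + Real.exp (-s / ε))

/-- Hypothesis (D): `A i`, `B p` locally Lipschitz and bounded below by `α > 0`. -/
def HypD {n : ℕ} (α : ℝ) (A : Fin n → ℝ → ℝ) (B : IdxZ n → ℝ → ℝ) : Prop :=
  0 < α ∧ (∀ i, LocallyLipschitz (A i) ∧ ∀ s, α ≤ A i s) ∧
    ∀ p, LocallyLipschitz (B p) ∧ ∀ s, α ≤ B p s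

/-- Hypothesis (M): `∫_{-∞}^0 e^{-γ t} dμ_p (t) < ∞`. -/
def HypM {n : ℕ} (γ : ℝ) (μ : IdxZ n → Measure ℝ) : Prop :=
  ∀ p, ∫⁻ t in Iic (0 : ℝ), ENNReal.ofReal (Real.exp (-γ * t)) ∂(μ p) < ⊤

/-- Hypothesis (I): continuity of the external stimuli. -/
def HypI {n : ℕ} (Istim : Fin n → ℝ → ℝ) : Prop := ∀ i, Continuous (Istim i)

/-- Decay term `D`. -/
def decayT {n : ℕ} (A : Fin n → ℝ → ℝ) (B : IdxZ n → ℝ → ℝ) (u : ℝ → NState n) : NState n :=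
  (fun i => -(A i ((u 0).1 i)) * (u 0).1 i, fun p => -(B p ((u 0).2 p)) * (u 0).2 p)

/-- Sigmoidal excitation and inhibition term `Σ^ε`. -/
def sigTerm {n : ℕ} (ε : ℝ) (μ : IdxZ n → Measure ℝ) (c d : IdxZ n → ℝ)
    (Γ : Fin n → ℝ) (u : ℝ → NState n) : NState n :=
  (fun i => ∑ k : Fin n,
      if h : k ≠ i then
        ((u 0).2 ⟨(k, i), h⟩ - c ⟨(k, i), h⟩) *
          ∫ τ in Iic (0 : ℝ), sigm ε ((u τ).1 k - Γ k) ∂(μ ⟨(k, i), h⟩)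
      else 0,
    fun p =>
      d p * (∫ τ in Iic (0 : ℝ), sigm ε ((u τ).1 p.1.1 - Γ p.1.1) ∂(μ p)) *
        max ((u 0).1 p.1.2) 0)

/-- Stimulus term `I(t) = ((I_i(t))_i, 0)`. -/
def stimT {n : ℕ} (Istim : Fin n → ℝ → ℝ) (t : ℝ) : NState n :=
  (fun i => Istim i t, 0)

/-- Right-hand side `f_ε(t,u) = D(u) + Σ^ε(u) + I(t)` of the sigmoidal system. -/
def fEps {n : ℕ} (ε : ℝ) (A : Fin n → ℝ → ℝ) (B : IdxZ n → ℝ → ℝ)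
    (μ : IdxZ n → Measure ℝ) (c d : IdxZ n → ℝ) (Γ : Fin n → ℝ)
    (Istim : Fin n → ℝ → ℝ) (t : ℝ) (u : ℝ → NState n) : NState n :=
  decayT A B u + sigTerm ε μ c d Γ u + stimT Istim t

/-- Solution of the sigmoidal system on `[t₀, t₁)` with initial datum `u₀` at `t₀`. -/
def IsSigSolOn {n : ℕ} (ε : ℝ) (A : Fin n → ℝ → ℝ) (B : IdxZ n → ℝ → ℝ)
    (μ : IdxZ n → Measure ℝ) (c d : IdxZ n → ℝ) (Γ : Fin n → ℝ)
    (Istim : Fin n → ℝ → ℝ) (t₀ t₁ : ℝ) (u₀ u : ℝ → NState n) : Prop :=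
  (∀ s ≤ (0 : ℝ), u (t₀ + s) = u₀ s) ∧ ContinuousOn u (Iio t₁) ∧
    ∀ t ∈ Ico t₀ t₁, HasDerivAt u (fEps ε A B μ c d Γ Istim t (hist u t)) t

/-- Solution of the sigmoidal system on the closed interval `[t₀, t₁]`. -/
def IsSigSolOnC {n : ℕ} (ε : ℝ) (A : Fin n → ℝ → ℝ) (B : IdxZ n → ℝ → ℝ)
    (μ : IdxZ n → Measure ℝ) (c d : IdxZ n → ℝ) (Γ : Fin n → ℝ)
    (Istim : Fin n → ℝ → ℝ) (t₀ t₁ : ℝ) (u₀ u : ℝ → NState n) : Prop :=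
  (∀ s ≤ (0 : ℝ), u (t₀ + s) = u₀ s) ∧ ContinuousOn u (Iic t₁) ∧
    ∀ t ∈ Ico t₀ t₁, HasDerivAt u (fEps ε A B μ c d Γ Istim t (hist u t)) t

/-- `b(ε) = ε log((1-ε)/ε)` for `ε ≠ 0`, `b(0) = 0`. -/
def bfun (ε : ℝ) : ℝ := if ε = 0 then 0 else ε * Real.log ((1 - ε) / ε)

/-- The set-valued function `χ_ε`. -/
def chiSet (ε s : ℝ) : Set ℝ :=
  if s < -bfun ε then Icc 0 ε else if s ≤ bfun ε then Icc 0 1 else Icc (1 - ε) 1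

/-- Aumann integral over `(-∞,0]` of a set-valued map `F` with respect to `μ`:
the set of integrals of integrable measurable selectors of `F`. -/
def aumann (F : ℝ → Set ℝ) (μ : Measure ℝ) : Set ℝ :=
  {y | ∃ s : ℝ → ℝ, Measurable s ∧ IntegrableOn s (Iic 0) μ ∧
      (∀ t ≤ (0 : ℝ), s t ∈ F t) ∧ y = ∫ t in Iic (0 : ℝ), s t ∂μ}

/-- Directed Hausdorff pseudometric `haus(A,B) = sup_{a∈A} inf_{b∈B} |a-b|`. -/
def hausd (S T : Set ℝ) : ℝ :=
  sSup ((fun a => sInf ((fun b => |a - b|) '' T)) '' S)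

/-- The `i`-th factor of `X^ε(u)`: the Minkowski sum over `k ≠ i` of
`(z_{ki}(0) - c_{ki}) • ∫ χ_ε(x_k(τ)-Γ_k) dμ_{ki}(τ)`. -/
def XsetX {n : ℕ} (ε : ℝ) (μ : IdxZ n → Measure ℝ) (c : IdxZ n → ℝ)
    (Γ : Fin n → ℝ) (u : ℝ → NState n) (i : Fin n) : Set ℝ :=
  {y | ∃ g : Fin n → ℝ, g i = 0 ∧
      (∀ k, ∀ h : k ≠ i,
        g k ∈ ((u 0).2 ⟨(k, i), h⟩ - c ⟨(k, i), h⟩) •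
          aumann (fun τ => chiSet ε ((u τ).1 k - Γ k)) (μ ⟨(k, i), h⟩)) ∧
      y = ∑ k, g k}

/-- The set-valued map `X^ε : C_γ → 𝒫(ℝ^{n²})`. -/
def Xset {n : ℕ} (ε : ℝ) (μ : IdxZ n → Measure ℝ) (c d : IdxZ n → ℝ)
    (Γ : Fin n → ℝ) (u : ℝ → NState n) : Set (NState n) :=
  {v | (∀ i, v.1 i ∈ XsetX ε μ c Γ u i) ∧
      ∀ p : IdxZ n, v.2 p ∈ (d p * max ((u 0).1 p.1.2) 0) •
        aumann (fun τ => chiSet ε ((u τ).1 p.1.1 - Γ p.1.1)) (μ p)}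

/-- Solution of the `ε`-inflated differential inclusion on `[t₀,t₁]` with initial
datum `u₀` at `t₀`: absolutely continuous on `[t₀,t₁]` (expressed in integral form)
with `u'(t) = D(u_t) + Σ(t) + I(t)` a.e. for some integrable selector `Σ(t) ∈ X^ε(u_t)`. -/
def IsIncSolOn {n : ℕ} (ε : ℝ) (A : Fin n → ℝ → ℝ) (B : IdxZ n → ℝ → ℝ)
    (μ : IdxZ n → Measure ℝ) (c d : IdxZ n → ℝ) (Γ : Fin n → ℝ)
    (Istim : Fin n → ℝ → ℝ) (t₀ t₁ : ℝ) (u₀ u : ℝ → NState n) : Prop :=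
  (∀ s ≤ (0 : ℝ), u (t₀ + s) = u₀ s) ∧ ContinuousOn u (Icc t₀ t₁) ∧
    ∃ S : ℝ → NState n,
      (∀ t ∈ Icc t₀ t₁, S t ∈ Xset ε μ c d Γ (hist u t)) ∧
      IntegrableOn (fun s => decayT A B (hist u s) + S s + stimT Istim s) (Icc t₀ t₁) ∧
      ∀ t ∈ Icc t₀ t₁,
        u t = u₀ 0 + ∫ s in t₀..t, (decayT A B (hist u s) + S s + stimT Istim s)

/-- Clamped history: the canonical representative in `C_γ` of the history `u_t`. -/
def clampHist {n : ℕ} (u : ℝ → NState n) (t : ℝ) : ℝ → NState n :=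
  fun s => u (t + min s 0)

/-- Attainability set `Φ^ε(t, t₀, u₀)` of the `ε`-inflated inclusion. -/
def attain {n : ℕ} (ε : ℝ) (A : Fin n → ℝ → ℝ) (B : IdxZ n → ℝ → ℝ)
    (μ : IdxZ n → Measure ℝ) (c d : IdxZ n → ℝ) (Γ : Fin n → ℝ)
    (Istim : Fin n → ℝ → ℝ) (t t₀ : ℝ) (u₀ : ℝ → NState n) : Set (ℝ → NState n) :=
  {v | ∃ u, IsIncSolOn ε A B μ c d Γ Istim t₀ t u₀ u ∧ v = clampHist u t}

/-- Total mass `|μ_p|` of the measure `μ_p` on `(-∞,0]`. -/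
def mTot {n : ℕ} (μ : IdxZ n → Measure ℝ) (p : IdxZ n) : ℝ := (μ p (Iic 0)).toReal

/-- Hypothesis (A). -/
def HypA {n : ℕ} (α : ℝ) (μ : IdxZ n → Measure ℝ) (d : IdxZ n → ℝ) : Prop :=
  ∃ lx lz nx nz eta eps : IdxZ n → ℝ,
    (∀ p, lx p ∈ ({1, mTot μ p ^ 2, d p ^ 2, mTot μ p ^ 2 * d p ^ 2} : Set ℝ) ∧
        lz p ∈ ({1, mTot μ p ^ 2, d p ^ 2, mTot μ p ^ 2 * d p ^ 2} : Set ℝ) ∧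
        lx p * lz p = mTot μ p ^ 2 * d p ^ 2 ∧
        nx p ∈ ({1, mTot μ p ^ 2} : Set ℝ) ∧ nz p ∈ ({1, mTot μ p ^ 2} : Set ℝ) ∧
        nx p * nz p = mTot μ p ^ 2 ∧ 0 < eta p ∧ 0 < eps p ∧
        nz p / eta p + lz p / eps p < 2 * α) ∧
    ∀ i : Fin n,
      (∑ k : Fin n, if h : k ≠ i then
          nx ⟨(k, i), h⟩ * eta ⟨(k, i), h⟩ + lx ⟨(k, i), h⟩ * eps ⟨(k, i), h⟩
        else 0) < 2 * α

/-- Directed Hausdorff "distance" between subsets of `C_γ`, w.r.t. `‖·‖_γ`. -/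
def setDistG (γ : ℝ) {n : ℕ} (S T : Set (ℝ → NState n)) : ℝ :=
  sSup ((fun a => sInf ((fun b => gNorm γ (fun s => a s - b s)) '' T)) '' S)



lemma one_add_exp_pos (x : ℝ) : 0 < 1 + Real.exp x := by positivity

lemma sigm_nonneg (ε s : ℝ) : 0 ≤ sigm ε s := by
  unfold sigm; positivity

lemma sigm_le_one (ε s : ℝ) : sigm ε s ≤ 1 := by
  unfold sigm
  rw [div_le_one (one_add_exp_pos _)]
  nlinarith [Real.exp_pos (-s / ε)]

lemma abs_sigm_le_one (ε s : ℝ) : |sigm ε s| ≤ 1 := by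
  rw [abs_le]; exact ⟨by linarith [sigm_nonneg ε s], sigm_le_one ε s⟩

lemma continuous_sigm (ε : ℝ) : Continuous (sigm ε) := by
  have h : Continuous fun s : ℝ => 1 + Real.exp (-s / ε) :=
    continuous_const.add (Real.continuous_exp.comp (continuous_neg.div_const ε))
  exact continuous_const.div h fun x => (one_add_exp_pos _).ne'

lemma sigm_hasDerivAt (ε : ℝ) (s : ℝ) :
    HasDerivAt (sigm ε)
      (-(Real.exp (-s / ε) * (-1 / ε)) / (1 + Real.exp (-s / ε)) ^ 2) s := by
  have h1 : HasDerivAt (fun x : ℝ => -x / ε) (-1 / ε) s := by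
    simpa using ((hasDerivAt_id s).neg.div_const ε)
  have h2 : HasDerivAt (fun x : ℝ => Real.exp (-x / ε)) (Real.exp (-s / ε) * (-1 / ε)) s :=
    h1.exp
  have h3 : HasDerivAt (fun x : ℝ => 1 + Real.exp (-x / ε))
      (Real.exp (-s / ε) * (-1 / ε)) s := h2.const_add 1
  have h4 := h3.inv (one_add_exp_pos (-s / ε)).ne'
  have : sigm ε = fun x : ℝ => (1 + Real.exp (-x / ε))⁻¹ := by
    funext x; simp [sigm, one_div]
  rw [this]
  exact h4

lemma sigm_lip {ε : ℝ} (hε : 0 < ε) (a b : ℝ) :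
    |sigm ε a - sigm ε b| ≤ (1 / ε) * |a - b| := by
  have key : ∀ x : ℝ, ‖-(Real.exp (-x / ε) * (-1 / ε)) / (1 + Real.exp (-x / ε)) ^ 2‖ ≤ 1 / ε := by
    intro x
    have he := Real.exp_pos (-x / ε)
    set e := Real.exp (-x / ε) with hedef
    have hE : -(e * (-1 / ε)) / (1 + e) ^ 2 = e / (ε * (1 + e) ^ 2) := by
      field_simp
    rw [hE, Real.norm_eq_abs, abs_of_nonneg (by positivity)]
    rw [div_le_div_iff₀ (by positivity) hε]
    nlinarith [he, sq_nonneg e]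
  have := Convex.norm_image_sub_le_of_norm_hasDerivWithin_le
    (f := sigm ε) (f' := fun x => -(Real.exp (-x / ε) * (-1 / ε)) / (1 + Real.exp (-x / ε)) ^ 2)
    (s := Set.univ) (x := b) (y := a) (C := 1 / ε)
    (fun x _ => (sigm_hasDerivAt ε x).hasDerivWithinAt)
    (fun x _ => key x) convex_univ (mem_univ b) (mem_univ a)
  simpa [Real.norm_eq_abs] using this

/-- A locally Lipschitz function is (boundedly) Lipschitz on every compact set. -/
lemma locLip_compact (f : ℝ → ℝ) (hf : LocallyLipschitz f) {s : Set ℝ} (hs : IsCompact s) :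
    ∃ K : ℝ, 0 ≤ K ∧ (∀ x ∈ s, |f x| ≤ K) ∧
      ∀ x ∈ s, ∀ y ∈ s, |f x - f y| ≤ K * |x - y| := by
  -- radius and constant at each point
  have hloc : ∀ x : ℝ, ∃ r : ℝ, 0 < r ∧ ∃ K : NNReal, LipschitzOnWith K f (Metric.ball x r) := by
    intro x
    obtain ⟨K, t, ht, hK⟩ := hf x
    obtain ⟨r, hr, hball⟩ := Metric.mem_nhds_iff.1 ht
    exact ⟨r, hr, K, hK.mono hball⟩
  choose r hr Kf hKf using hloc
  obtain ⟨T, hTs, hTcov⟩ := hs.elim_nhds_subcover (fun x => Metric.ball x (r x / 2))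
    (fun x _ => Metric.ball_mem_nhds x (by linarith [hr x]))
  obtain ⟨C, hC⟩ := hs.exists_bound_of_continuousOn hf.continuous.continuousOn
  rcases T.eq_empty_or_nonempty with hT | hT
  · refine ⟨0, le_refl _, ?_, ?_⟩ <;> intro x hx <;>
    · exfalso; have := hTcov hx; simp [hT] at this
  · set δ : ℝ := T.inf' hT (fun x => r x / 2) with hδdef
    have hδpos : 0 < δ := by
      rw [hδdef, Finset.lt_inf'_iff]
      exact fun x _ => by linarith [hr x]
    set K₀ : ℝ := T.sup' hT (fun x => (Kf x : ℝ)) with hK₀def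
    have hK₀ : ∀ x ∈ T, (Kf x : ℝ) ≤ K₀ := fun x hx => Finset.le_sup' (fun x => (Kf x : ℝ)) hx
    have hK₀0 : 0 ≤ K₀ := by
      obtain ⟨x, hx⟩ := hT
      exact le_trans (Kf x).coe_nonneg (hK₀ x hx)
    set C' : ℝ := max C 0 with hC'def
    refine ⟨K₀ + 2 * C' / δ + C', by positivity, ?_, ?_⟩
    · intro x hx
      have := hC x hx
      rw [Real.norm_eq_abs] at this
      have h1 : |f x| ≤ C' := le_trans this (le_max_left _ _)
      have h2 : (0:ℝ) ≤ 2 * C' / δ := by positivity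
      linarith
    · intro x hx y hy
      rcases lt_or_ge (dist x y) δ with hd | hd
      · -- close: same ball
        obtain ⟨z, hzT, hzx⟩ : ∃ z ∈ T, x ∈ Metric.ball z (r z / 2) := by
          have := hTcov hx; simpa using this
        have hyz : y ∈ Metric.ball z (r z) := by
          rw [Metric.mem_ball] at *
          have hδz : δ ≤ r z / 2 := Finset.inf'_le _ hzT
          calc dist y z ≤ dist y x + dist x z := dist_triangle _ _ _
            _ < δ + r z / 2 := by rw [dist_comm y x]; linarith
            _ ≤ r z := by linarith
        have hxz : x ∈ Metric.ball z (r z) :=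
          Metric.ball_subset_ball (by linarith [hr z]) hzx
        have := (hKf z).dist_le_mul x hxz y hyz
        rw [Real.dist_eq, Real.dist_eq] at this
        calc |f x - f y| ≤ (Kf z : ℝ) * |x - y| := this
          _ ≤ (K₀ + 2 * C' / δ + C') * |x - y| := by
              apply mul_le_mul_of_nonneg_right _ (abs_nonneg _)
              have := hK₀ z hzT
              have : (0:ℝ) ≤ 2 * C' / δ := by positivity
              have : (0:ℝ) ≤ C' := le_max_right C 0
              linarith [hK₀ z hzT, (by positivity : (0:ℝ) ≤ 2 * C' / δ)]
          _ = _ := rfl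
      · -- far apart
        have h1 : |f x| ≤ C' := le_trans (by simpa [Real.norm_eq_abs] using hC x hx) (le_max_left _ _)
        have h2 : |f y| ≤ C' := le_trans (by simpa [Real.norm_eq_abs] using hC y hy) (le_max_left _ _)
        have habs : δ ≤ |x - y| := by rwa [Real.dist_eq] at hd
        have hC'0 : (0:ℝ) ≤ C' := le_max_right C 0
        calc |f x - f y| ≤ |f x| + |f y| := abs_sub _ _
          _ ≤ 2 * C' := by linarith
          _ = (2 * C' / δ) * δ := by field_simp
          _ ≤ (2 * C' / δ) * |x - y| := by
              apply mul_le_mul_of_nonneg_left habs (by positivity)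
          _ ≤ (K₀ + 2 * C' / δ + C') * |x - y| := by
              apply mul_le_mul_of_nonneg_right _ (abs_nonneg _)
              linarith

set_option maxHeartbeats 1000000 in
lemma key_estimate {n : ℕ} (A : Fin n → ℝ → ℝ) (B : IdxZ n → ℝ → ℝ)
    (μ : IdxZ n → Measure ℝ) (c d : IdxZ n → ℝ) (Γ : Fin n → ℝ) (Istim : Fin n → ℝ → ℝ)
    (ε : ℝ) (hε : 0 < ε) (u v : ℝ → NState n) (t : ℝ)
    (hcu : ContinuousOn (fun τ : ℝ => u (t + τ)) (Iic 0))
    (hcv : ContinuousOn (fun τ : ℝ => v (t + τ)) (Iic 0))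
    (μfin : ∀ p : IdxZ n, μ p (Iic 0) < ⊤)
    (R M : ℝ) (hM0 : 0 ≤ M)
    (hRu : ‖u t‖ ≤ R) (hRv : ‖v t‖ ≤ R)
    (KA : Fin n → ℝ) (hKA : ∀ i, 0 ≤ KA i ∧ (∀ x ∈ Icc (-R) R, |A i x| ≤ KA i) ∧
       ∀ x ∈ Icc (-R) R, ∀ y ∈ Icc (-R) R, |A i x - A i y| ≤ KA i * |x - y|)
    (KB : IdxZ n → ℝ) (hKB : ∀ p, 0 ≤ KB p ∧ (∀ x ∈ Icc (-R) R, |B p x| ≤ KB p) ∧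
       ∀ x ∈ Icc (-R) R, ∀ y ∈ Icc (-R) R, |B p x - B p y| ≤ KB p * |x - y|)
    (hc : ∀ p, 0 ≤ c p) (hd : ∀ p, 0 ≤ d p)
    (hdiff : ∀ s ≤ t, ‖u s - v s‖ ≤ M) :
    ‖fEps ε A B μ c d Γ Istim t (hist u t) - fEps ε A B μ c d Γ Istim t (hist v t)‖ ≤
      ((∑ i, KA i) * (1 + R) + (∑ p, KB p) * (1 + R)
        + (n : ℝ) * ((∑ p, (μ p (Iic 0)).toReal) * (1 + (R + ∑ p, c p) / ε))
        + (∑ p, d p) * ((∑ p, (μ p (Iic 0)).toReal) * (R / ε + 1))) * M := by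
  have hR0 : 0 ≤ R := le_trans (norm_nonneg _) hRu
  set SA : ℝ := ∑ i, KA i with hSAdef
  set SB : ℝ := ∑ p, KB p with hSBdef
  set Cμ : ℝ := ∑ p : IdxZ n, (μ p (Iic 0)).toReal with hCμdef
  set Cc : ℝ := ∑ p : IdxZ n, c p with hCcdef
  set Cd : ℝ := ∑ p : IdxZ n, d p with hCddef
  clear_value SA SB Cμ Cc Cd
  have hSA0 : 0 ≤ SA := by rw [hSAdef]; exact Finset.sum_nonneg fun i _ => (hKA i).1
  have hSB0 : 0 ≤ SB := by rw [hSBdef]; exact Finset.sum_nonneg fun p _ => (hKB p).1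
  have hCμ0 : 0 ≤ Cμ := by
    rw [hCμdef]; exact Finset.sum_nonneg fun p _ => ENNReal.toReal_nonneg
  have hCc0 : 0 ≤ Cc := by rw [hCcdef]; exact Finset.sum_nonneg fun p _ => hc p
  have hCd0 : 0 ≤ Cd := by rw [hCddef]; exact Finset.sum_nonneg fun p _ => hd p
  have hSAle : ∀ i, KA i ≤ SA := fun i => by
    rw [hSAdef]; exact Finset.single_le_sum (fun j _ => (hKA j).1) (Finset.mem_univ i)
  have hSBle : ∀ p, KB p ≤ SB := fun p => by
    rw [hSBdef]; exact Finset.single_le_sum (fun q _ => (hKB q).1) (Finset.mem_univ p)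
  have hCμle : ∀ p, (μ p (Iic 0)).toReal ≤ Cμ := fun p => by
    rw [hCμdef]
    exact Finset.single_le_sum (f := fun q : IdxZ n => (μ q (Iic 0)).toReal)
      (fun q _ => ENNReal.toReal_nonneg) (Finset.mem_univ p)
  have hCcle : ∀ p, c p ≤ Cc := fun p => by
    rw [hCcdef]; exact Finset.single_le_sum (fun q _ => hc q) (Finset.mem_univ p)
  have hCdle : ∀ p, d p ≤ Cd := fun p => by
    rw [hCddef]; exact Finset.single_le_sum (fun q _ => hd q) (Finset.mem_univ p)
  have hcomp1 : ∀ (w : NState n) (k : Fin n), |w.1 k| ≤ ‖w‖ := fun w k => by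
    simpa [Real.norm_eq_abs] using (norm_le_pi_norm w.1 k).trans (norm_fst_le w)
  have hcomp2 : ∀ (w : NState n) (p : IdxZ n), |w.2 p| ≤ ‖w‖ := fun w p => by
    simpa [Real.norm_eq_abs] using (norm_le_pi_norm w.2 p).trans (norm_snd_le w)
  have hxu : ∀ k, |(u t).1 k| ≤ R := fun k => (hcomp1 (u t) k).trans hRu
  have hxv : ∀ k, |(v t).1 k| ≤ R := fun k => (hcomp1 (v t) k).trans hRv
  have hzu : ∀ p, |(u t).2 p| ≤ R := fun p => (hcomp2 (u t) p).trans hRu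
  have hzv : ∀ p, |(v t).2 p| ≤ R := fun p => (hcomp2 (v t) p).trans hRv
  have hdx : ∀ s, s ≤ t → ∀ k, |(u s).1 k - (v s).1 k| ≤ M := fun s hs k => by
    have h := (hcomp1 (u s - v s) k).trans (hdiff s hs)
    simpa using h
  have hdz : ∀ s, s ≤ t → ∀ p, |(u s).2 p - (v s).2 p| ≤ M := fun s hs p => by
    have h := (hcomp2 (u s - v s) p).trans (hdiff s hs)
    simpa using h
  -- integral machinery
  have hfinr : ∀ p : IdxZ n, IsFiniteMeasure ((μ p).restrict (Iic 0)) := fun p =>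
    ⟨by rw [Measure.restrict_apply_univ]; exact μfin p⟩
  have hmeasw : ∀ (w : ℝ → NState n), ContinuousOn (fun τ : ℝ => w (t + τ)) (Iic 0) →
      ∀ k : Fin n, ContinuousOn (fun τ : ℝ => sigm ε ((w (t + τ)).1 k - Γ k)) (Iic 0) := by
    intro w hw k
    exact (continuous_sigm ε).comp_continuousOn
      ((((continuous_apply k).comp continuous_fst).comp_continuousOn hw).sub continuousOn_const)
  have hint : ∀ (w : ℝ → NState n), ContinuousOn (fun τ : ℝ => w (t + τ)) (Iic 0) →
      ∀ (k : Fin n) (p : IdxZ n),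
      IntegrableOn (fun τ : ℝ => sigm ε ((w (t + τ)).1 k - Γ k)) (Iic 0) (μ p) := by
    intro w hw k p
    haveI := hfinr p
    refine ⟨(hmeasw w hw k).aestronglyMeasurable measurableSet_Iic, ?_⟩
    exact HasFiniteIntegral.of_bounded (C := 1) (ae_of_all _ fun τ => by
      simpa [Real.norm_eq_abs] using abs_sigm_le_one ε _)
  have hIbound : ∀ (w : ℝ → NState n), ContinuousOn (fun τ : ℝ => w (t + τ)) (Iic 0) →
      ∀ (k : Fin n) (p : IdxZ n),
      |∫ τ in Iic (0:ℝ), sigm ε ((w (t + τ)).1 k - Γ k) ∂(μ p)| ≤ Cμ := by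
    intro w hw k p
    haveI := hfinr p
    have h := norm_integral_le_of_norm_le_const (μ := (μ p).restrict (Iic 0))
      (f := fun τ : ℝ => sigm ε ((w (t + τ)).1 k - Γ k)) (C := 1)
      (ae_of_all _ fun τ => by simpa [Real.norm_eq_abs] using abs_sigm_le_one ε _)
    rw [measureReal_def, Measure.restrict_apply_univ, one_mul, Real.norm_eq_abs] at h
    exact h.trans (hCμle p)
  have hIdiff : ∀ (k : Fin n) (p : IdxZ n),
      |(∫ τ in Iic (0:ℝ), sigm ε ((u (t + τ)).1 k - Γ k) ∂(μ p))
        - ∫ τ in Iic (0:ℝ), sigm ε ((v (t + τ)).1 k - Γ k) ∂(μ p)| ≤ M / ε * Cμ := by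
    intro k p
    haveI := hfinr p
    rw [← integral_sub (hint u hcu k p) (hint v hcv k p)]
    have h := norm_integral_le_of_norm_le_const (μ := (μ p).restrict (Iic 0))
      (f := fun τ : ℝ => sigm ε ((u (t + τ)).1 k - Γ k) - sigm ε ((v (t + τ)).1 k - Γ k))
      (C := M / ε) ?_
    · rw [measureReal_def, Measure.restrict_apply_univ, Real.norm_eq_abs] at h
      calc |∫ τ in Iic (0:ℝ), (sigm ε ((u (t + τ)).1 k - Γ k)
              - sigm ε ((v (t + τ)).1 k - Γ k)) ∂(μ p)|
          ≤ M / ε * (μ p (Iic 0)).toReal := h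
        _ ≤ M / ε * Cμ := mul_le_mul_of_nonneg_left (hCμle p) (by positivity)
    · refine (ae_restrict_iff' measurableSet_Iic).2 (ae_of_all _ fun τ hτ => ?_)
      rw [Real.norm_eq_abs]
      have h1 := sigm_lip hε ((u (t + τ)).1 k - Γ k) ((v (t + τ)).1 k - Γ k)
      rw [sub_sub_sub_cancel_right] at h1
      have h2 : |(u (t + τ)).1 k - (v (t + τ)).1 k| ≤ M :=
        hdx (t + τ) (by simpa using hτ) k
      calc |sigm ε ((u (t + τ)).1 k - Γ k) - sigm ε ((v (t + τ)).1 k - Γ k)|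
          ≤ 1 / ε * |(u (t + τ)).1 k - (v (t + τ)).1 k| := h1
        _ ≤ 1 / ε * M := by
            exact mul_le_mul_of_nonneg_left h2 (by positivity)
        _ = M / ε := by rw [one_div_mul_eq_div]
  -- naming of blocks
  set b1 : ℝ := SA * (1 + R) with hb1
  set b2 : ℝ := SB * (1 + R) with hb2
  set b3 : ℝ := (n : ℝ) * (Cμ * (1 + (R + Cc) / ε)) with hb3
  set b4 : ℝ := Cd * (Cμ * (R / ε + 1)) with hb4
  clear_value b1 b2 b3 b4
  have hb10 : 0 ≤ b1 := by rw [hb1]; exact mul_nonneg hSA0 (by linarith)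
  have hb20 : 0 ≤ b2 := by rw [hb2]; exact mul_nonneg hSB0 (by linarith)
  have hb30 : 0 ≤ b3 := by
    rw [hb3]
    have : 0 ≤ (R + Cc) / ε := by positivity
    exact mul_nonneg (Nat.cast_nonneg n) (mul_nonneg hCμ0 (by linarith))
  have hb40 : 0 ≤ b4 := by
    rw [hb4]
    have : 0 ≤ R / ε := by positivity
    exact mul_nonneg hCd0 (mul_nonneg hCμ0 (by linarith))
  -- x components
  have hX : ∀ i : Fin n,
      |(fEps ε A B μ c d Γ Istim t (hist u t) - fEps ε A B μ c d Γ Istim t (hist v t)).1 i|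
        ≤ (b1 + b2 + b3 + b4) * M := by
    intro i
    have hexp : (fEps ε A B μ c d Γ Istim t (hist u t)
          - fEps ε A B μ c d Γ Istim t (hist v t)).1 i
        = (-(A i ((u t).1 i)) * (u t).1 i - -(A i ((v t).1 i)) * (v t).1 i)
          + ∑ k : Fin n,
            ((if h : k ≠ i then ((u t).2 ⟨(k, i), h⟩ - c ⟨(k, i), h⟩) *
                ∫ τ in Iic (0:ℝ), sigm ε ((u (t + τ)).1 k - Γ k) ∂(μ ⟨(k, i), h⟩) else 0)
            - (if h : k ≠ i then ((v t).2 ⟨(k, i), h⟩ - c ⟨(k, i), h⟩) *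
                ∫ τ in Iic (0:ℝ), sigm ε ((v (t + τ)).1 k - Γ k) ∂(μ ⟨(k, i), h⟩) else 0)) := by
      simp only [fEps, Prod.fst_sub, Prod.fst_add, Pi.sub_apply, Pi.add_apply,
        decayT, sigTerm, stimT, hist, add_zero, Finset.sum_sub_distrib]
      ring
    rw [hexp]
    -- decay part
    obtain ⟨hKA0, hKAb, hKAl⟩ := hKA i
    have hmemu : (u t).1 i ∈ Icc (-R) R := by
      have := abs_le.1 (hxu i); exact ⟨this.1, this.2⟩
    have hmemv : (v t).1 i ∈ Icc (-R) R := by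
      have := abs_le.1 (hxv i); exact ⟨this.1, this.2⟩
    have hdecay : |(-(A i ((u t).1 i)) * (u t).1 i - -(A i ((v t).1 i)) * (v t).1 i)|
        ≤ b1 * M := by
      have heq : -(A i ((u t).1 i)) * (u t).1 i - -(A i ((v t).1 i)) * (v t).1 i
          = A i ((u t).1 i) * ((v t).1 i - (u t).1 i)
            + (A i ((v t).1 i) - A i ((u t).1 i)) * (v t).1 i := by ring
      rw [heq]
      have e1 : |A i ((u t).1 i) * ((v t).1 i - (u t).1 i)| ≤ KA i * M := by
        rw [abs_mul]
        have : |(v t).1 i - (u t).1 i| ≤ M := by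
          rw [abs_sub_comm]; exact hdx t le_rfl i
        exact mul_le_mul (hKAb _ hmemu) this (abs_nonneg _) hKA0
      have e2 : |(A i ((v t).1 i) - A i ((u t).1 i)) * (v t).1 i| ≤ KA i * M * R := by
        rw [abs_mul]
        have h1 : |A i ((v t).1 i) - A i ((u t).1 i)| ≤ KA i * M := by
          refine (hKAl _ hmemv _ hmemu).trans ?_
          have : |(v t).1 i - (u t).1 i| ≤ M := by
            rw [abs_sub_comm]; exact hdx t le_rfl i
          exact mul_le_mul_of_nonneg_left this hKA0
        exact mul_le_mul h1 (hxv i) (abs_nonneg _) (by positivity)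
      calc |A i ((u t).1 i) * ((v t).1 i - (u t).1 i)
              + (A i ((v t).1 i) - A i ((u t).1 i)) * (v t).1 i|
          ≤ |A i ((u t).1 i) * ((v t).1 i - (u t).1 i)|
            + |(A i ((v t).1 i) - A i ((u t).1 i)) * (v t).1 i| := abs_add_le _ _
        _ ≤ KA i * M + KA i * M * R := add_le_add e1 e2
        _ = KA i * (1 + R) * M := by ring
        _ ≤ SA * (1 + R) * M :=
            mul_le_mul_of_nonneg_right
              (mul_le_mul_of_nonneg_right (hSAle i) (by linarith)) hM0
        _ = b1 * M := by rw [hb1]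
    -- sum part
    have hsum : |∑ k : Fin n,
            ((if h : k ≠ i then ((u t).2 ⟨(k, i), h⟩ - c ⟨(k, i), h⟩) *
                ∫ τ in Iic (0:ℝ), sigm ε ((u (t + τ)).1 k - Γ k) ∂(μ ⟨(k, i), h⟩) else 0)
            - (if h : k ≠ i then ((v t).2 ⟨(k, i), h⟩ - c ⟨(k, i), h⟩) *
                ∫ τ in Iic (0:ℝ), sigm ε ((v (t + τ)).1 k - Γ k) ∂(μ ⟨(k, i), h⟩) else 0))|
        ≤ b3 * M := by
      have hterm : ∀ k : Fin n,
          |(if h : k ≠ i then ((u t).2 ⟨(k, i), h⟩ - c ⟨(k, i), h⟩) *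
                ∫ τ in Iic (0:ℝ), sigm ε ((u (t + τ)).1 k - Γ k) ∂(μ ⟨(k, i), h⟩) else 0)
            - (if h : k ≠ i then ((v t).2 ⟨(k, i), h⟩ - c ⟨(k, i), h⟩) *
                ∫ τ in Iic (0:ℝ), sigm ε ((v (t + τ)).1 k - Γ k) ∂(μ ⟨(k, i), h⟩) else 0)|
          ≤ Cμ * (1 + (R + Cc) / ε) * M := by
        intro k
        by_cases h : k ≠ i
        · simp only [dif_pos h]
          set p : IdxZ n := ⟨(k, i), h⟩ with hp
          set Iu : ℝ := ∫ τ in Iic (0:ℝ), sigm ε ((u (t + τ)).1 k - Γ k) ∂(μ p) with hIu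
          set Iv : ℝ := ∫ τ in Iic (0:ℝ), sigm ε ((v (t + τ)).1 k - Γ k) ∂(μ p) with hIv
          have heq : ((u t).2 p - c p) * Iu - ((v t).2 p - c p) * Iv
              = ((u t).2 p - (v t).2 p) * Iu + ((v t).2 p - c p) * (Iu - Iv) := by ring
          rw [heq]
          have e1 : |((u t).2 p - (v t).2 p) * Iu| ≤ M * Cμ := by
            rw [abs_mul]
            exact mul_le_mul (hdz t le_rfl p) (hIbound u hcu k p) (abs_nonneg _) hM0
          have e2 : |((v t).2 p - c p) * (Iu - Iv)| ≤ (R + Cc) * (M / ε * Cμ) := by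
            rw [abs_mul]
            have h1 : |(v t).2 p - c p| ≤ R + Cc := by
              calc |(v t).2 p - c p| ≤ |(v t).2 p| + |c p| := abs_sub _ _
                _ ≤ R + Cc := add_le_add (hzv p) (by rw [abs_of_nonneg (hc p)]; exact hCcle p)
            exact mul_le_mul h1 (hIdiff k p) (abs_nonneg _) (by linarith)
          calc |((u t).2 p - (v t).2 p) * Iu + ((v t).2 p - c p) * (Iu - Iv)|
              ≤ |((u t).2 p - (v t).2 p) * Iu| + |((v t).2 p - c p) * (Iu - Iv)| := abs_add_le _ _
            _ ≤ M * Cμ + (R + Cc) * (M / ε * Cμ) := add_le_add e1 e2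
            _ = Cμ * (1 + (R + Cc) / ε) * M := by ring
        · simp only [dif_neg h, sub_zero, abs_zero]
          have : 0 ≤ (R + Cc) / ε := by positivity
          have hM' : 0 ≤ Cμ * (1 + (R + Cc) / ε) :=
            mul_nonneg hCμ0 (by linarith)
          exact mul_nonneg hM' hM0
      refine (Finset.abs_sum_le_sum_abs _ _).trans ?_
      refine (Finset.sum_le_sum fun k _ => hterm k).trans ?_
      rw [Finset.sum_const, Finset.card_univ, Fintype.card_fin, nsmul_eq_mul, hb3]
      exact le_of_eq (by ring)
    refine (abs_add_le _ _).trans ?_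
    refine (add_le_add hdecay hsum).trans ?_
    have h1 : 0 ≤ b2 * M := mul_nonneg hb20 hM0
    have h2 : 0 ≤ b4 * M := mul_nonneg hb40 hM0
    linarith
  -- z components
  have hZ : ∀ p : IdxZ n,
      |(fEps ε A B μ c d Γ Istim t (hist u t) - fEps ε A B μ c d Γ Istim t (hist v t)).2 p|
        ≤ (b1 + b2 + b3 + b4) * M := by
    intro p
    have hexp : (fEps ε A B μ c d Γ Istim t (hist u t)
          - fEps ε A B μ c d Γ Istim t (hist v t)).2 p
        = (-(B p ((u t).2 p)) * (u t).2 p - -(B p ((v t).2 p)) * (v t).2 p)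
          + (d p * (∫ τ in Iic (0:ℝ), sigm ε ((u (t + τ)).1 p.1.1 - Γ p.1.1) ∂(μ p))
              * max ((u t).1 p.1.2) 0
            - d p * (∫ τ in Iic (0:ℝ), sigm ε ((v (t + τ)).1 p.1.1 - Γ p.1.1) ∂(μ p))
              * max ((v t).1 p.1.2) 0) := by
      simp only [fEps, Prod.snd_sub, Prod.snd_add, Pi.sub_apply, Pi.add_apply,
        decayT, sigTerm, stimT, hist, add_zero]
      ring
    rw [hexp]
    obtain ⟨hKB0, hKBb, hKBl⟩ := hKB p
    have hmemu : (u t).2 p ∈ Icc (-R) R := by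
      have := abs_le.1 (hzu p); exact ⟨this.1, this.2⟩
    have hmemv : (v t).2 p ∈ Icc (-R) R := by
      have := abs_le.1 (hzv p); exact ⟨this.1, this.2⟩
    have hdecay : |(-(B p ((u t).2 p)) * (u t).2 p - -(B p ((v t).2 p)) * (v t).2 p)|
        ≤ b2 * M := by
      have heq : -(B p ((u t).2 p)) * (u t).2 p - -(B p ((v t).2 p)) * (v t).2 p
          = B p ((u t).2 p) * ((v t).2 p - (u t).2 p)
            + (B p ((v t).2 p) - B p ((u t).2 p)) * (v t).2 p := by ring
      rw [heq]
      have hd1 : |(v t).2 p - (u t).2 p| ≤ M := by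
        rw [abs_sub_comm]; exact hdz t le_rfl p
      have e1 : |B p ((u t).2 p) * ((v t).2 p - (u t).2 p)| ≤ KB p * M := by
        rw [abs_mul]; exact mul_le_mul (hKBb _ hmemu) hd1 (abs_nonneg _) hKB0
      have e2 : |(B p ((v t).2 p) - B p ((u t).2 p)) * (v t).2 p| ≤ KB p * M * R := by
        rw [abs_mul]
        have h1 : |B p ((v t).2 p) - B p ((u t).2 p)| ≤ KB p * M :=
          (hKBl _ hmemv _ hmemu).trans (mul_le_mul_of_nonneg_left hd1 hKB0)
        exact mul_le_mul h1 (hzv p) (abs_nonneg _) (by positivity)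
      calc |B p ((u t).2 p) * ((v t).2 p - (u t).2 p)
              + (B p ((v t).2 p) - B p ((u t).2 p)) * (v t).2 p|
          ≤ _ + _ := abs_add_le _ _
        _ ≤ KB p * M + KB p * M * R := add_le_add e1 e2
        _ = KB p * (1 + R) * M := by ring
        _ ≤ SB * (1 + R) * M :=
            mul_le_mul_of_nonneg_right
              (mul_le_mul_of_nonneg_right (hSBle p) (by linarith)) hM0
        _ = b2 * M := by rw [hb2]
    have hdpart : |d p * (∫ τ in Iic (0:ℝ), sigm ε ((u (t + τ)).1 p.1.1 - Γ p.1.1) ∂(μ p))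
              * max ((u t).1 p.1.2) 0
            - d p * (∫ τ in Iic (0:ℝ), sigm ε ((v (t + τ)).1 p.1.1 - Γ p.1.1) ∂(μ p))
              * max ((v t).1 p.1.2) 0| ≤ b4 * M := by
      set Iu : ℝ := ∫ τ in Iic (0:ℝ), sigm ε ((u (t + τ)).1 p.1.1 - Γ p.1.1) ∂(μ p) with hIu
      set Iv : ℝ := ∫ τ in Iic (0:ℝ), sigm ε ((v (t + τ)).1 p.1.1 - Γ p.1.1) ∂(μ p) with hIv
      set mu : ℝ := max ((u t).1 p.1.2) 0 with hmu
      set mv : ℝ := max ((v t).1 p.1.2) 0 with hmv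
      have heq : d p * Iu * mu - d p * Iv * mv
          = d p * ((Iu - Iv) * mu + Iv * (mu - mv)) := by ring
      rw [heq, abs_mul, abs_of_nonneg (hd p)]
      have hmuR : |mu| ≤ R := by
        rw [hmu, abs_of_nonneg (le_max_right _ _)]
        exact (max_le (le_abs_self _) (abs_nonneg _)).trans (hxu p.1.2)
      have hmumv : |mu - mv| ≤ M := by
        refine (abs_max_sub_max_le_abs _ _ _).trans ?_
        exact hdx t le_rfl p.1.2
      have e1 : |(Iu - Iv) * mu| ≤ M / ε * Cμ * R := by
        rw [abs_mul]
        exact mul_le_mul (hIdiff p.1.1 p) hmuR (abs_nonneg _) (by positivity)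
      have e2 : |Iv * (mu - mv)| ≤ Cμ * M := by
        rw [abs_mul]
        exact mul_le_mul (hIbound v hcv p.1.1 p) hmumv (abs_nonneg _) hCμ0
      calc d p * |(Iu - Iv) * mu + Iv * (mu - mv)|
          ≤ d p * (M / ε * Cμ * R + Cμ * M) := by
            refine mul_le_mul_of_nonneg_left ?_ (hd p)
            exact (abs_add_le _ _).trans (add_le_add e1 e2)
        _ ≤ Cd * (M / ε * Cμ * R + Cμ * M) := by
            refine mul_le_mul_of_nonneg_right (hCdle p) ?_
            have : 0 ≤ M / ε * Cμ * R := by positivity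
            have : 0 ≤ Cμ * M := mul_nonneg hCμ0 hM0
            positivity
        _ = Cd * (Cμ * (R / ε + 1)) * M := by ring
        _ = b4 * M := by rw [hb4]
    refine (abs_add_le _ _).trans ?_
    refine (add_le_add hdecay hdpart).trans ?_
    have h1 : 0 ≤ b1 * M := mul_nonneg hb10 hM0
    have h2 : 0 ≤ b3 * M := mul_nonneg hb30 hM0
    linarith
  -- assemble
  have hKM0 : 0 ≤ (b1 + b2 + b3 + b4) * M := by
    have : 0 ≤ b1 + b2 + b3 + b4 := by linarith
    exact mul_nonneg this hM0
  rw [Prod.norm_def]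
  refine max_le ?_ ?_
  · rw [pi_norm_le_iff_of_nonneg hKM0]
    intro i
    rw [Real.norm_eq_abs]
    exact hX i
  · rw [pi_norm_le_iff_of_nonneg hKM0]
    intro p
    rw [Real.norm_eq_abs]
    exact hZ p

set_option maxHeartbeats 1000000 in
/-- uniqueness of solutions of the sigmoidal system. -/
theorem stmt5 {n : ℕ} (hn : 2 ≤ n) (γ α : ℝ) (hγ : 0 < γ)
    (A : Fin n → ℝ → ℝ) (B : IdxZ n → ℝ → ℝ) (μ : IdxZ n → Measure ℝ)
    (c d : IdxZ n → ℝ) (Γ : Fin n → ℝ) (Istim : Fin n → ℝ → ℝ)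
    (hD : HypD α A B) (hM : HypM γ μ) (hI : HypI Istim)
    (hc : ∀ p, 0 ≤ c p) (hd : ∀ p, 0 ≤ d p)
    (ε : ℝ) (hε : 0 < ε) (t₀ t₁ t₂ : ℝ)
    (u₀ : ℝ → NState n) (hu₀ : InC γ u₀)
    (u v : ℝ → NState n)
    (hu : IsSigSolOn ε A B μ c d Γ Istim t₀ t₁ u₀ u)
    (hv : IsSigSolOn ε A B μ c d Γ Istim t₀ t₂ u₀ v) :
    ∀ t < min t₁ t₂, u t = v t := by
  obtain ⟨hα, hDA, hDB⟩ := hD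
  obtain ⟨huinit, hucont, huder⟩ := hu
  obtain ⟨hvinit, hvcont, hvder⟩ := hv
  -- the measures are finite on (-∞,0]
  have μfin : ∀ p : IdxZ n, μ p (Iic 0) < ⊤ := by
    intro p
    have hmono : (μ p) (Iic 0) ≤ ∫⁻ τ in Iic (0:ℝ), ENNReal.ofReal (Real.exp (-γ * τ)) ∂(μ p) := by
      rw [← setLIntegral_one]
      refine setLIntegral_mono ?_ ?_
      · exact ENNReal.measurable_ofReal.comp (Real.measurable_exp.comp (measurable_id.const_mul (-γ)))
      · intro τ hτ
        rw [show (1 : ENNReal) = ENNReal.ofReal 1 by simp]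
        refine ENNReal.ofReal_le_ofReal ?_
        have : (0:ℝ) ≤ -γ * τ := by
          have : τ ≤ 0 := hτ
          nlinarith
        exact Real.one_le_exp this
    exact lt_of_le_of_lt hmono (hM p)
  -- solutions agree up to t₀
  have heq0 : ∀ s, s ≤ t₀ → u s = v s := by
    intro s hs
    have h1 := huinit (s - t₀) (by linarith)
    have h2 := hvinit (s - t₀) (by linarith)
    rw [show t₀ + (s - t₀) = s by ring] at h1 h2
    rw [h1, h2]
  intro t ht
  rcases le_or_gt t t₀ with hle | hlt
  · exact heq0 t hle
  have ht1 : t < t₁ := lt_of_lt_of_le ht (min_le_left _ _)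
  have ht2 : t < t₂ := lt_of_lt_of_le ht (min_le_right _ _)
  have hsub1 : Icc t₀ t ⊆ Iio t₁ := fun s hs => lt_of_le_of_lt hs.2 ht1
  have hsub2 : Icc t₀ t ⊆ Iio t₂ := fun s hs => lt_of_le_of_lt hs.2 ht2
  -- uniform bound on the two solutions on [t₀, t]
  obtain ⟨Ru, hRu⟩ := isCompact_Icc.exists_bound_of_continuousOn (hucont.mono hsub1)
  obtain ⟨Rv, hRv⟩ := isCompact_Icc.exists_bound_of_continuousOn (hvcont.mono hsub2)
  set R : ℝ := max Ru Rv with hRdef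
  have hRu' : ∀ s ∈ Icc t₀ t, ‖u s‖ ≤ R := fun s hs => (hRu s hs).trans (le_max_left _ _)
  have hRv' : ∀ s ∈ Icc t₀ t, ‖v s‖ ≤ R := fun s hs => (hRv s hs).trans (le_max_right _ _)
  -- Lipschitz data for A and B on [-R, R]
  have hKAex : ∀ i : Fin n, ∃ K : ℝ, 0 ≤ K ∧ (∀ x ∈ Icc (-R) R, |A i x| ≤ K) ∧
      ∀ x ∈ Icc (-R) R, ∀ y ∈ Icc (-R) R, |A i x - A i y| ≤ K * |x - y| :=
    fun i => locLip_compact (A i) (hDA i).1 isCompact_Icc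
  choose KA hKA using hKAex
  have hKBex : ∀ p : IdxZ n, ∃ K : ℝ, 0 ≤ K ∧ (∀ x ∈ Icc (-R) R, |B p x| ≤ K) ∧
      ∀ x ∈ Icc (-R) R, ∀ y ∈ Icc (-R) R, |B p x - B p y| ≤ K * |x - y| :=
    fun p => locLip_compact (B p) (hDB p).1 isCompact_Icc
  choose KB hKB using hKBex
  set K' : ℝ := max ((∑ i, KA i) * (1 + R) + (∑ p, KB p) * (1 + R)
        + (n : ℝ) * ((∑ p, (μ p (Iic 0)).toReal) * (1 + (R + ∑ p, c p) / ε))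
        + (∑ p, d p) * ((∑ p, (μ p (Iic 0)).toReal) * (R / ε + 1))) 0 with hK'def
  have hK'0 : 0 ≤ K' := le_max_right _ _
  -- the set on which the solutions agree
  set E : Set ℝ := {s | s ∈ Icc t₀ t ∧ ∀ r ∈ Icc t₀ s, u r = v r} with hEdef
  have ht₀E : t₀ ∈ E := by
    refine ⟨⟨le_rfl, hlt.le⟩, fun r hr => ?_⟩
    exact heq0 r hr.2
  have hEne : E.Nonempty := ⟨t₀, ht₀E⟩
  have hEbd : BddAbove E := ⟨t, fun s hs => hs.1.2⟩
  set τ : ℝ := sSup E with hτdef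
  have hτ₀ : t₀ ≤ τ := le_csSup hEbd ht₀E
  have hτT : τ ≤ t := csSup_le hEne fun s hs => hs.1.2
  have hbefore : ∀ r, t₀ ≤ r → r < τ → u r = v r := by
    intro r h1 h2
    obtain ⟨s, hsE, hrs⟩ := exists_lt_of_lt_csSup hEne h2
    exact hsE.2 r ⟨h1, hrs.le⟩
  have hallτ : ∀ r, r ≤ τ → u r = v r := by
    intro r hr
    rcases lt_or_ge r t₀ with h' | h'
    · exact heq0 r h'.le
    rcases eq_or_lt_of_le hr with heq | h''
    · -- r = τ : continuity argument
      rcases eq_or_lt_of_le h' with h3 | h3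
      · exact heq0 r (le_of_eq h3.symm)
      have hcu : ContinuousAt u r :=
        hucont.continuousAt (Iio_mem_nhds (lt_of_le_of_lt hr (lt_of_le_of_lt hτT ht1)))
      have hcv : ContinuousAt v r :=
        hvcont.continuousAt (Iio_mem_nhds (lt_of_le_of_lt hr (lt_of_le_of_lt hτT ht2)))
      have h0 : Tendsto (fun s => u s - v s) (𝓝[<] r) (𝓝 (u r - v r)) :=
        ((hcu.sub hcv).tendsto).mono_left nhdsWithin_le_nhds
      have h1 : Tendsto (fun s => u s - v s) (𝓝[<] r) (𝓝 0) := by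
        refine Tendsto.congr' ?_ tendsto_const_nhds
        filter_upwards [Ioo_mem_nhdsLT_of_mem (⟨h3, le_rfl⟩ : r ∈ Ioc t₀ r)] with s hs
        rw [hbefore s hs.1.le (lt_of_lt_of_le hs.2 hr), sub_self]
      exact sub_eq_zero.1 (tendsto_nhds_unique h0 h1)
    · exact hbefore r h' h''
  have hτt : τ = t := by
    by_contra hne
    have hτlt : τ < t := lt_of_le_of_ne hτT hne
    set δ : ℝ := min (t - τ) (1 / (2 * (K' + 1))) with hδdef
    have hδpos : 0 < δ := lt_min (by linarith) (by positivity)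
    have hδle : δ ≤ 1 / (2 * (K' + 1)) := min_le_right _ _
    have hτδ : τ + δ ≤ t := by
      have := min_le_left (t - τ) (1 / (2 * (K' + 1)))
      have : δ ≤ t - τ := by rw [hδdef]; exact this
      linarith
    set J : Set ℝ := Icc τ (τ + δ) with hJdef
    have hJsub : J ⊆ Icc t₀ t := fun s hs => ⟨le_trans hτ₀ hs.1, le_trans hs.2 hτδ⟩
    have hwcont : ContinuousOn (fun s => ‖u s - v s‖) J :=
      (((hucont.mono (fun s hs => hsub1 (hJsub hs))).sub
        (hvcont.mono (fun s hs => hsub2 (hJsub hs)))).norm)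
    obtain ⟨s₀, hs₀J, hs₀max⟩ := isCompact_Icc.exists_isMaxOn
      (nonempty_Icc.2 (by linarith)) hwcont
    set M : ℝ := ‖u s₀ - v s₀‖ with hMdef
    have hM0 : 0 ≤ M := norm_nonneg _
    have hmax : ∀ s ∈ J, ‖u s - v s‖ ≤ M := fun s hs => isMaxOn_iff.1 hs₀max s hs
    have hdiffle : ∀ t' ∈ J, ∀ s, s ≤ t' → ‖u s - v s‖ ≤ M := by
      intro t' ht' s hs
      rcases le_or_gt s τ with h | h
      · rw [hallτ s h, sub_self, norm_zero]; exact hM0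
      · exact hmax s ⟨h.le, le_trans hs ht'.2⟩
    have hbnd : ∀ t' ∈ J,
        ‖fEps ε A B μ c d Γ Istim t' (hist u t') - fEps ε A B μ c d Γ Istim t' (hist v t')‖
          ≤ K' * M := by
      intro t' ht'
      have ht'm : t' ∈ Icc t₀ t := hJsub ht'
      have hcu : ContinuousOn (fun s : ℝ => u (t' + s)) (Iic 0) := by
        refine ContinuousOn.comp (g := u) hucont
          ((continuous_const.add continuous_id).continuousOn) ?_
        intro s hs
        have : s ≤ 0 := hs
        exact mem_Iio.2 (lt_of_le_of_lt (by linarith [ht'm.2] : t' + s ≤ t) ht1)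
      have hcv : ContinuousOn (fun s : ℝ => v (t' + s)) (Iic 0) := by
        refine ContinuousOn.comp (g := v) hvcont
          ((continuous_const.add continuous_id).continuousOn) ?_
        intro s hs
        have : s ≤ 0 := hs
        exact mem_Iio.2 (lt_of_le_of_lt (by linarith [ht'm.2] : t' + s ≤ t) ht2)
      have hkey := key_estimate A B μ c d Γ Istim ε hε u v t' hcu hcv μfin R M hM0
        (hRu' t' ht'm) (hRv' t' ht'm) KA hKA KB hKB hc hd (hdiffle t' ht')
      refine hkey.trans ?_
      exact mul_le_mul_of_nonneg_right (le_max_left _ _) hM0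
    have hder : ∀ t' ∈ J, HasDerivWithinAt (fun s => u s - v s)
        (fEps ε A B μ c d Γ Istim t' (hist u t') - fEps ε A B μ c d Γ Istim t' (hist v t')) J t' := by
      intro t' ht'
      have ht'm : t' ∈ Icc t₀ t := hJsub ht'
      have h1 := huder t' ⟨ht'm.1, lt_of_le_of_lt ht'm.2 ht1⟩
      have h2 := hvder t' ⟨ht'm.1, lt_of_le_of_lt ht'm.2 ht2⟩
      exact (h1.sub h2).hasDerivWithinAt
    have hcontr := Convex.norm_image_sub_le_of_norm_hasDerivWithin_le hder hbnd
      (convex_Icc τ (τ + δ)) (⟨le_rfl, by linarith⟩ : τ ∈ J) hs₀J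
    have hwτ : u τ - v τ = 0 := sub_eq_zero.2 (hallτ τ le_rfl)
    rw [hwτ, sub_zero] at hcontr
    have hs₀δ : ‖s₀ - τ‖ ≤ δ := by
      rw [Real.norm_eq_abs, abs_of_nonneg (by linarith [hs₀J.1] : (0:ℝ) ≤ s₀ - τ)]
      linarith [hs₀J.2]
    have hMle : M ≤ K' * M * δ := by
      refine le_trans hcontr ?_
      exact mul_le_mul_of_nonneg_left hs₀δ (mul_nonneg hK'0 hM0)
    have hhalf : K' * M * δ ≤ M / 2 := by
      have h1 : K' * M * δ ≤ K' * M * (1 / (2 * (K' + 1))) :=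
        mul_le_mul_of_nonneg_left hδle (mul_nonneg hK'0 hM0)
      have h2 : K' * M * (1 / (2 * (K' + 1))) ≤ M / 2 := by
        rw [mul_one_div, div_le_div_iff₀ (by positivity) (by norm_num : (0:ℝ) < 2)]
        nlinarith
      linarith
    have hMzero : M = 0 := le_antisymm (by linarith) hM0
    have hJeq : ∀ s ∈ J, u s = v s := by
      intro s hs
      have := hmax s hs
      rw [hMzero] at this
      exact sub_eq_zero.1 (norm_le_zero_iff.1 this)
    have hmemE : τ + δ ∈ E := by
      refine ⟨⟨by linarith, by linarith⟩, fun r hr => ?_⟩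
      rcases le_or_gt r τ with h | h
      · exact hallτ r h
      · exact hJeq r ⟨h.le, hr.2⟩
    have := le_csSup hEbd hmemE
    rw [← hτdef] at this
    linarith
  exact hallτ t (by rw [hτt])

end
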